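/- Let ψ : Ω → ℝ be C³ with nonvanishing gradient on an open set Ω ⊆ ℝⁿ⁺¹, and let f : ℝ → ℝ be C³ with f' nowhere zero. Then at every point of Ω, ∇·( Δ(f∘ψ) · ∇(f∘ψ) / |∇(f∘ψ)|² ) − Δ log |∇(f∘ψ)| = ∇·( Δψ · ∇ψ / |∇ψ|² ) − Δ log |∇ψ|. In other words, the combination ∇·(V∇ψ/F²) − Δ log F is invariant under composition ψ ↦ f∘ψ with a diffeomorphism f of the real line. -/

import Mathlib

/-!
For `g = f ∘ ψ` the chain rule gives `∇g = f'(ψ) ∇ψ` and `Δg = f''(ψ) |∇ψ|² + f'(ψ) Δψ`, hence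
`Δg ∇g / |∇g|² = (f''/f')(ψ) ∇ψ + Δψ ∇ψ / |∇ψ|²` and `∇ log |∇g| = (f''/f')(ψ) ∇ψ + ∇ log |∇ψ|`.
Both terms of the expression therefore change by the divergence of the same field
`(f''/f')(ψ) ∇ψ`, which cancels in their difference. All identities are local, so they only
need to hold on a neighbourhood of the point, where `ψ` stays `C²` and `∇ψ ≠ 0`.
-/

open Real

/-- Partial derivative along the `i`-th coordinate direction in `Fin d → ℝ`. -/
noncomputable def pd {d : ℕ} (i : Fin d) (f : (Fin d → ℝ) → ℝ) (x : Fin d → ℝ) : ℝ :=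
  fderiv ℝ f x (Pi.single i 1)

/-- The flat Laplacian on `Fin d → ℝ`. -/
noncomputable def lap {d : ℕ} (f : (Fin d → ℝ) → ℝ) (x : Fin d → ℝ) : ℝ :=
  ∑ i, pd i (pd i f) x

/-- The combination ∇·(Δg · ∇g / |∇g|²) − Δ log |∇g|, which equals the Ricci scalar
curvature of the level sets of `g`. -/
noncomputable def curvExpr {d : ℕ} (g : (Fin d → ℝ) → ℝ) (x : Fin d → ℝ) : ℝ :=
  (∑ i, pd i (fun y => lap g y * pd i g y / (∑ j, (pd j g y) ^ 2)) x) -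
    lap (fun y => Real.log (Real.sqrt (∑ j, (pd j g y) ^ 2))) x

open Filter Topology

noncomputable def gradNormSq {d : ℕ} (g : (Fin d → ℝ) → ℝ) (y : Fin d → ℝ) : ℝ :=
  ∑ j, (pd j g y) ^ 2

noncomputable def logGradNorm {d : ℕ} (g : (Fin d → ℝ) → ℝ) (y : Fin d → ℝ) : ℝ :=
  Real.log √(gradNormSq g y)

section PartialDerivative

variable {d : ℕ} {u v w : (Fin d → ℝ) → ℝ} {x : Fin d → ℝ}

theorem Filter.EventuallyEq.pd_eq (h : u =ᶠ[𝓝 x] v) (i : Fin d) : pd i u x = pd i v x := by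
  simp only [pd, h.fderiv_eq]

theorem pd_add (hu : DifferentiableAt ℝ u x) (hv : DifferentiableAt ℝ v x) (i : Fin d) :
    pd i (fun y => u y + v y) x = pd i u x + pd i v x := by
  simp only [pd, fderiv_fun_add hu hv, add_apply]

theorem pd_mul (hu : DifferentiableAt ℝ u x) (hv : DifferentiableAt ℝ v x) (i : Fin d) :
    pd i (fun y => u y * v y) x = pd i u x * v x + u x * pd i v x := by
  simp only [pd, fderiv_fun_mul hu hv, add_apply, smul_apply, smul_eq_mul]
  ring

theorem pd_comp {g : ℝ → ℝ} (hg : DifferentiableAt ℝ g (u x)) (hu : DifferentiableAt ℝ u x)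
    (i : Fin d) : pd i (g ∘ u) x = deriv g (u x) * pd i u x := by
  simp only [pd, (hg.hasDerivAt.comp_hasFDerivAt x hu.hasFDerivAt).fderiv, smul_apply,
    smul_eq_mul]

theorem pd_eventuallyEq_add (h : u =ᶠ[𝓝 x] fun y => v y + w y)
    (hv : ∀ᶠ y in 𝓝 x, DifferentiableAt ℝ v y) (hw : ∀ᶠ y in 𝓝 x, DifferentiableAt ℝ w y)
    (i : Fin d) : pd i u =ᶠ[𝓝 x] fun y => pd i v y + pd i w y := by
  filter_upwards [h.eventuallyEq_nhds, hv, hw] with y hy hvy hwy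
  rw [hy.pd_eq, pd_add hvy hwy]

theorem ContDiffAt.pd {m n : WithTop ℕ∞} (h : ContDiffAt ℝ n u x) (hmn : m + 1 ≤ n) (i : Fin d) :
    ContDiffAt ℝ m (pd i u) x :=
  (h.fderiv_right hmn).clm_apply contDiffAt_const

theorem ContDiffAt.gradNormSq {m n : WithTop ℕ∞} (h : ContDiffAt ℝ n u x) (hmn : m + 1 ≤ n) :
    ContDiffAt ℝ m (gradNormSq u) x :=
  ContDiffAt.sum fun j _ => (h.pd hmn j).pow 2

theorem ContDiffAt.lap {m n : WithTop ℕ∞} (h : ContDiffAt ℝ n u x) (hmn : m + 2 ≤ n) :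
    ContDiffAt ℝ m (lap u) x := by
  have h1 : m + 1 + 1 ≤ n := by rwa [add_assoc, one_add_one_eq_two]
  exact ContDiffAt.sum fun i _ => (h.pd h1 i).pd le_rfl i

theorem gradNormSq_nonneg (y : Fin d → ℝ) : 0 ≤ gradNormSq u y :=
  Finset.sum_nonneg fun j _ => sq_nonneg (pd j u y)

theorem ContDiffAt.logGradNorm {m n : WithTop ℕ∞} (h : ContDiffAt ℝ n u x) (hmn : m + 1 ≤ n)
    (hS : _root_.gradNormSq u x ≠ 0) : ContDiffAt ℝ m (_root_.logGradNorm u) x :=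
  ((h.gradNormSq hmn).sqrt hS).log
    (Real.sqrt_ne_zero'.mpr ((gradNormSq_nonneg x).lt_of_ne' hS))

end PartialDerivative

section Composition

variable {d : ℕ} {u : (Fin d → ℝ) → ℝ} {x : Fin d → ℝ} {g : ℝ → ℝ}

theorem gradNormSq_comp (hg : DifferentiableAt ℝ g (u x)) (hu : DifferentiableAt ℝ u x) :
    gradNormSq (g ∘ u) x = deriv g (u x) ^ 2 * gradNormSq u x := by
  simp only [gradNormSq, pd_comp hg hu, mul_pow, Finset.mul_sum]

theorem lap_comp (hg : ContDiff ℝ 2 g) (hu : ContDiffAt ℝ 2 u x) :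
    lap (g ∘ u) x = deriv (deriv g) (u x) * gradNormSq u x + deriv g (u x) * lap u x := by
  have hg' : Differentiable ℝ (deriv g) :=
    (hg.deriv' (n := 1)).differentiable one_ne_zero
  have hu' : ∀ᶠ y in 𝓝 x, DifferentiableAt ℝ u y :=
    (hu.eventually (by simp)).mono fun y hy => hy.differentiableAt two_ne_zero
  have hchain (i : Fin d) : pd i (g ∘ u) =ᶠ[𝓝 x] fun y => (deriv g ∘ u) y * pd i u y :=
    hu'.mono fun y hy => pd_comp (hg.differentiable two_ne_zero _) hy i
  simp only [lap, gradNormSq, Finset.mul_sum, ← Finset.sum_add_distrib]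
  refine Finset.sum_congr rfl fun i _ => ?_
  rw [(hchain i).pd_eq, pd_mul ((hg' _).comp x hu'.self_of_nhds)
    ((hu.pd (m := 1) le_rfl i).differentiableAt one_ne_zero), pd_comp (hg' _) hu'.self_of_nhds,
    Function.comp_apply]
  ring

theorem logGradNorm_comp (hg : DifferentiableAt ℝ g (u x)) (hg' : deriv g (u x) ≠ 0)
    (hu : DifferentiableAt ℝ u x) (hS : gradNormSq u x ≠ 0) :
    logGradNorm (g ∘ u) x = Real.log (deriv g (u x)) + logGradNorm u x := by
  -- `Real.log` is even, so the sign of `g'` does not matter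
  have hS_pos : 0 < gradNormSq u x := (gradNormSq_nonneg x).lt_of_ne' hS
  rw [logGradNorm, gradNormSq_comp hg hu, Real.sqrt_mul (sq_nonneg _), Real.sqrt_sq_eq_abs,
    Real.log_mul (abs_ne_zero.mpr hg') (Real.sqrt_pos.mpr hS_pos).ne', Real.log_abs, logGradNorm]

theorem eventually_gradNormSq_ne_zero (hu : ContDiffAt ℝ 1 u x) (hS : gradNormSq u x ≠ 0) :
    ∀ᶠ y in 𝓝 x, gradNormSq u y ≠ 0 :=
  (hu.gradNormSq (m := 0) le_rfl).continuousAt.eventually_ne hS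

theorem lap_mul_pd_div_gradNormSq_comp_eventuallyEq (hg : ContDiff ℝ 2 g)
    (hg' : ∀ t, deriv g t ≠ 0) (hu : ContDiffAt ℝ 2 u x) (hS : gradNormSq u x ≠ 0) (i : Fin d) :
    (fun y => lap (g ∘ u) y * pd i (g ∘ u) y / gradNormSq (g ∘ u) y) =ᶠ[𝓝 x] fun y =>
      deriv (deriv g) (u y) / deriv g (u y) * pd i u y + lap u y * pd i u y / gradNormSq u y := by
  filter_upwards [hu.eventually (by simp), eventually_gradNormSq_ne_zero (hu.of_le one_le_two) hS]
    with y hy hSy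
  have hgd : DifferentiableAt ℝ g (u y) := hg.differentiable two_ne_zero _
  have hud : DifferentiableAt ℝ u y := hy.differentiableAt two_ne_zero
  have hg'y := hg' (u y)
  rw [lap_comp hg hy, pd_comp hgd hud, gradNormSq_comp hgd hud]
  field_simp

theorem pd_logGradNorm_comp_eventuallyEq (hg : ContDiff ℝ 2 g) (hg' : ∀ t, deriv g t ≠ 0)
    (hu : ContDiffAt ℝ 2 u x) (hS : gradNormSq u x ≠ 0) (i : Fin d) :
    pd i (logGradNorm (g ∘ u)) =ᶠ[𝓝 x] fun y =>
      deriv (deriv g) (u y) / deriv g (u y) * pd i u y + pd i (logGradNorm u) y := by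
  have hu_near : ∀ᶠ y in 𝓝 x, ContDiffAt ℝ 2 u y := hu.eventually (by simp)
  have hS_near : ∀ᶠ y in 𝓝 x, gradNormSq u y ≠ 0 :=
    eventually_gradNormSq_ne_zero (hu.of_le one_le_two) hS
  have hlog_deriv (t : ℝ) :
      HasDerivAt (fun s => Real.log (deriv g s)) (deriv (deriv g) t / deriv g t) t :=
    ((hg.deriv' (n := 1)).differentiable one_ne_zero t).hasDerivAt.log (hg' t)
  have hsplit : logGradNorm (g ∘ u) =ᶠ[𝓝 x]
      fun y => ((fun s => Real.log (deriv g s)) ∘ u) y + logGradNorm u y := by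
    filter_upwards [hu_near, hS_near] with y hy hSy
    exact logGradNorm_comp (hg.differentiable two_ne_zero _) (hg' _)
      (hy.differentiableAt two_ne_zero) hSy
  have hlog_comp_diff : ∀ᶠ y in 𝓝 x,
      DifferentiableAt ℝ ((fun s => Real.log (deriv g s)) ∘ u) y :=
    hu_near.mono fun y hy => (hlog_deriv _).differentiableAt.comp y (hy.differentiableAt two_ne_zero)
  have hlogGradNorm_diff : ∀ᶠ y in 𝓝 x, DifferentiableAt ℝ (logGradNorm u) y := by
    filter_upwards [hu_near, hS_near] with y hy hSy
    exact (hy.logGradNorm (m := 1) le_rfl hSy).differentiableAt one_ne_zero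
  filter_upwards [pd_eventuallyEq_add hsplit hlog_comp_diff hlogGradNorm_diff i, hu_near]
    with y hy hyu
  rw [hy, pd_comp (hlog_deriv _).differentiableAt (hyu.differentiableAt two_ne_zero),
    (hlog_deriv _).deriv]

theorem curvExpr_eq_sum (v : (Fin d → ℝ) → ℝ) (y : Fin d → ℝ) :
    curvExpr v y = ∑ i, (pd i (fun z => lap v z * pd i v z / gradNormSq v z) y -
      pd i (pd i (logGradNorm v)) y) := by
  rw [Finset.sum_sub_distrib]
  rfl

theorem curvExpr_comp (hg : ContDiff ℝ 3 g) (hg' : ∀ t, deriv g t ≠ 0)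
    (hu : ContDiffAt ℝ 3 u x) (hS : gradNormSq u x ≠ 0) :
    curvExpr (g ∘ u) x = curvExpr u x := by
  have hg2 : ContDiff ℝ 2 g := hg.of_le (by norm_num)
  have hu2 : ContDiffAt ℝ 2 u x := hu.of_le (by norm_num)
  have hu1 : ContDiffAt ℝ 1 u x := hu.of_le (by norm_num)
  have hW (i : Fin d) :
      DifferentiableAt ℝ (fun y => deriv (deriv g) (u y) / deriv g (u y) * pd i u y) x := by
    have hg₁ : ContDiff ℝ 2 (deriv g) := hg.deriv' (n := 2)
    have hg₂ : ContDiff ℝ 1 (deriv (deriv g)) := hg₁.deriv' (n := 1)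
    exact ((((hg₂.comp_contDiffAt x hu1).div ((hg₁.of_le (by norm_num)).comp_contDiffAt x hu1)
      (hg' _)).mul (hu.pd (by norm_num) i))).differentiableAt one_ne_zero
  have hfield (i : Fin d) :
      DifferentiableAt ℝ (fun y => lap u y * pd i u y / gradNormSq u y) x :=
    (((hu.lap (m := 1) (by norm_num)).mul (hu.pd (by norm_num) i)).div
      (hu.gradNormSq (by norm_num)) hS).differentiableAt one_ne_zero
  have hgrad_log (i : Fin d) : DifferentiableAt ℝ (pd i (logGradNorm u)) x :=
    ((hu.logGradNorm (m := 2) (by norm_num) hS).pd (m := 1) le_rfl i).differentiableAt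
      one_ne_zero
  rw [curvExpr_eq_sum, curvExpr_eq_sum]
  refine Finset.sum_congr rfl fun i _ => ?_
  rw [(lap_mul_pd_div_gradNormSq_comp_eventuallyEq hg2 hg' hu2 hS i).pd_eq,
    (pd_logGradNorm_comp_eventuallyEq hg2 hg' hu2 hS i).pd_eq,
    pd_add (hW i) (hfield i), pd_add (hW i) (hgrad_log i)]
  ring

end Composition

theorem diffeomorphic_invariance (n : ℕ)
    (Ω : Set (Fin (n + 1) → ℝ)) (hΩ : IsOpen Ω)
    (ψ : (Fin (n + 1) → ℝ) → ℝ) (hψ : ContDiffOn ℝ 3 ψ Ω)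
    (hgrad : ∀ x ∈ Ω, (∑ j, (pd j ψ x) ^ 2) ≠ 0)
    (f : ℝ → ℝ) (hf : ContDiff ℝ 3 f) (hf' : ∀ t, deriv f t ≠ 0) :
    ∀ x ∈ Ω, curvExpr (f ∘ ψ) x = curvExpr ψ x := fun x hx =>
  curvExpr_comp hf hf' (hψ.contDiffAt (hΩ.mem_nhds hx)) (hgrad x hx)
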